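/- Let A be a countably infinite oligomorphic relational structure without algebraicity. Then for every a ∈ A, the set {s ∈ End(A) : a ∈ range(s)} is open in the Zariski topology on the monoid End(A). -/

import Mathlib

/-!
By no algebraicity there are automorphisms `αₙ` that move `a` but fix the first `n` points of
an enumeration of `A`. Since there are finitely many orbits of tuples of each length, a
Kőnig-type argument yields automorphisms `fₘ` and indices `nₘ ≥ m` such that `fₘ` and
`fₘ ∘ α_{nₘ}` converge pointwise; the limits `p` and `q` are locally automorphisms, hence
endomorphisms, and they agree off `a` but differ at `a`.
Hence `a ∈ range s` iff `p ∘ s ≠ q ∘ s`, a subbasic Zariski-open condition.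
-/

/-- Evaluation of the word `p_k · s · p_{k-1} · s ⋯ s · p_0` at `s`,
where the word is given by its lowest coefficient `p₀` and the list
`ps = [p₁, …, p_k]` of the remaining coefficients. -/
def wordEval {S : Type*} [Monoid S] (s : S) (p₀ : S) (ps : List S) : S :=
  ps.foldl (fun acc q => q * s * acc) p₀

/-- The Zariski topology on a monoid `S`: generated by the sets
`M_{φ,ψ} = {s | φ(s) ≠ ψ(s)}` for all pairs of words `φ, ψ` with coefficients in `S`. -/
def zariskiTopology (S : Type*) [Monoid S] : TopologicalSpace S :=
  TopologicalSpace.generateFrom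
    { M : Set S | ∃ (p₀ : S) (ps : List S) (q₀ : S) (qs : List S),
        M = { s : S | wordEval s p₀ ps ≠ wordEval s q₀ qs } }

/-- The topology of pointwise convergence on functions `A → A`:
the product topology where every factor `A` is discrete. -/
def pwTop (A : Type*) : TopologicalSpace (A → A) :=
  @Pi.topologicalSpace A (fun _ => A) (fun _ => ⊥)

/-- `f` is a homomorphism between the relational structures `⟨A, R⟩` and `⟨B, S⟩`
(same relational language: index set `ι` with arities `ar`). -/
def IsHomOn {ι : Type*} {ar : ι → ℕ} {A B : Type*}
    (R : ∀ i, (Fin (ar i) → A) → Prop) (S : ∀ i, (Fin (ar i) → B) → Prop)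
    (f : A → B) : Prop :=
  ∀ i x, R i x → S i (fun j => f (x j))

/-- `f` is an automorphism of the relational structure `⟨A, R⟩`. -/
def IsAutoOn {ι : Type*} {ar : ι → ℕ} {A : Type*}
    (R : ∀ i, (Fin (ar i) → A) → Prop) (f : A → A) : Prop :=
  Function.Bijective f ∧ ∀ i x, R i x ↔ R i (fun j => f (x j))

/-- `⟨A, R⟩` is oligomorphic: for every `n ≥ 1`, the diagonal action of the
automorphism group on `n`-tuples has finitely many orbits. -/
def Oligomorphic {ι : Type*} {ar : ι → ℕ} {A : Type*}
    (R : ∀ i, (Fin (ar i) → A) → Prop) : Prop :=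
  ∀ n : ℕ, 1 ≤ n →
    {O : Set (Fin n → A) | ∃ x : Fin n → A,
      O = {y | ∃ f, IsAutoOn R f ∧ y = fun j => f (x j)}}.Finite

/-- `⟨A, R⟩` has no algebraicity: for every finite `Y ⊆ A` and `a ∉ Y`, the orbit
of `a` under automorphisms fixing `Y` pointwise is infinite. -/
def NoAlgebraicity {ι : Type*} {ar : ι → ℕ} {A : Type*}
    (R : ∀ i, (Fin (ar i) → A) → Prop) : Prop :=
  ∀ (Y : Finset A) (a : A), a ∉ Y →
    {b : A | ∃ f, IsAutoOn R f ∧ (∀ y ∈ Y, f y = y) ∧ f a = b}.Infinite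

/-- The endomorphism monoid of the relational structure `⟨A, R⟩`, as a submonoid of
`Function.End A` (self-maps of `A` under composition). -/
def endSubmonoid {ι : Type*} {ar : ι → ℕ} {A : Type*}
    (R : ∀ i, (Fin (ar i) → A) → Prop) : Submonoid (Function.End A) where
  carrier := {f | IsHomOn R R f}
  one_mem' := fun _ _ h => h
  mul_mem' := fun {_ _} hf hg i x h => hf i _ (hg i x h)

open Set Topology

theorem Set.Infinite.exists_infinite_inter_preimage {α β : Type*} {N : Set α} (hN : N.Infinite)
    {f : α → β} (hf : (f '' N).Finite) : ∃ b, (N ∩ f ⁻¹' {b}).Infinite := by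
  by_contra! h
  exact hN (Finite.of_finite_fibers f hf fun b _ => h b)

section Relational

variable {ι A B : Type*} {ar : ι → ℕ} {R : ∀ i, (Fin (ar i) → A) → Prop}

theorem isAutoOn_id : IsAutoOn R id :=
  ⟨Function.bijective_id, fun _ _ => Iff.rfl⟩

theorem IsAutoOn.comp {f g : A → A} (hf : IsAutoOn R f) (hg : IsAutoOn R g) :
    IsAutoOn R (f ∘ g) :=
  ⟨hf.1.comp hg.1, fun i x => (hg.2 i x).trans (hf.2 i _)⟩

theorem IsAutoOn.isHomOn {f : A → A} (hf : IsAutoOn R f) : IsHomOn R R f :=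
  fun i x => (hf.2 i x).mp

theorem isHomOn_of_forall_finset_exists_eqOn {S : ∀ i, (Fin (ar i) → B) → Prop} {g : A → B}
    (h : ∀ F : Finset A, ∃ f, IsHomOn R S f ∧ EqOn g f F) : IsHomOn R S g := by
  classical
  intro i x hx
  obtain ⟨f, hf, hgf⟩ := h (Finset.univ.image x)
  have hxf : (fun j => g (x j)) = fun j => f (x j) :=
    funext fun j => hgf (Finset.mem_coe.mpr (Finset.mem_image_of_mem x (Finset.mem_univ j)))
  exact hxf ▸ hf i x hx

variable (R) in
def autOrbit {m : ℕ} (x : Fin m → A) : Set (Fin m → A) :=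
  {y | ∃ f, IsAutoOn R f ∧ y = fun j => f (x j)}

theorem exists_isAutoOn_of_autOrbit_eq {m : ℕ} {x y : Fin m → A}
    (h : autOrbit R x = autOrbit R y) : ∃ f, IsAutoOn R f ∧ ∀ j, x j = f (y j) := by
  have hx : x ∈ autOrbit R y := h ▸ ⟨id, isAutoOn_id, rfl⟩
  obtain ⟨f, hf, rfl⟩ := hx
  exact ⟨f, hf, fun _ => rfl⟩

variable (R) in
def realizers (u : ℕ → ℕ → A) (m : ℕ) (s : ℕ → A) : Set ℕ :=
  {n | ∃ f, IsAutoOn R f ∧ ∀ j < m, s j = f (u n j)}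

theorem realizers_congr {u : ℕ → ℕ → A} {m : ℕ} {s s' : ℕ → A} (h : ∀ j < m, s j = s' j) :
    realizers R u m s = realizers R u m s' := by
  ext n
  exact exists_congr fun f => and_congr_right fun _ =>
    forall₂_congr fun j hj => by rw [h j hj]

theorem exists_infinite_realizers_succ (holig : Oligomorphic R) {u : ℕ → ℕ → A} {m : ℕ}
    {s : ℕ → A} (hs : (realizers R u m s).Infinite) :
    ∃ s', (realizers R u (m + 1) s').Infinite ∧ ∀ j < m, s' j = s j := by
  let orb := fun n => autOrbit R (fun j : Fin (m + 1) => u n j)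
  obtain ⟨O, hO⟩ := hs.exists_infinite_inter_preimage (f := orb)
    ((holig (m + 1) m.succ_pos).subset (image_subset_iff.mpr fun n _ => ⟨_, rfl⟩))
  obtain ⟨n₁, ⟨f₁, hf₁, hs₁⟩, hn₁⟩ := hO.nonempty
  refine ⟨fun j => f₁ (u n₁ j), hO.mono ?_, fun j hj => (hs₁ j hj).symm⟩
  rintro n ⟨-, hn⟩
  obtain ⟨g, hg, hgj⟩ := exists_isAutoOn_of_autOrbit_eq (hn₁.trans hn.symm : orb n₁ = orb n)
  exact ⟨f₁ ∘ g, hf₁.comp hg, fun j hj => congrArg f₁ (hgj ⟨j, hj⟩)⟩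

-- One orbit of each length is realized infinitely often; composing automorphisms keeps the
-- chosen representatives coherent.
theorem exists_forall_infinite_realizers (holig : Oligomorphic R) (u : ℕ → ℕ → A) :
    ∃ t : ℕ → A, ∀ m, (realizers R u m t).Infinite := by
  choose next hnext_inf hnext_eq using
    fun m (s : {s : ℕ → A // (realizers R u m s).Infinite}) =>
      exists_infinite_realizers_succ holig s.2
  have hbase : (realizers R u 0 (u 0)).Infinite :=
    (eq_univ_of_forall fun _ => ⟨id, isAutoOn_id, fun j hj => absurd hj j.not_lt_zero⟩ :
      realizers R u 0 (u 0) = univ) ▸ infinite_univ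
  let S : ∀ m, {s : ℕ → A // (realizers R u m s).Infinite} :=
    fun m => Nat.rec ⟨u 0, hbase⟩ (fun m s => ⟨next m s, hnext_inf m s⟩) m
  have hcoh : ∀ m k, ∀ j < m, (S (m + k)).1 j = (S m).1 j := by
    intro m k
    induction k with
    | zero => exact fun _ _ => rfl
    | succ k ih => exact fun j hj => (hnext_eq _ (S (m + k)) j (by omega)).trans (ih j hj)
  refine ⟨fun j => (S (j + 1)).1 j, fun m => ?_⟩
  rw [realizers_congr (s' := (S m).1)]
  · exact (S m).2
  · intro j hj
    obtain ⟨k, rfl⟩ := Nat.exists_eq_add_of_le hj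
    exact (hcoh (j + 1) k j j.lt_succ_self).symm

theorem exists_isAutoOn_fixing_ne (halg : NoAlgebraicity R) (Y : Finset A) (a : A) :
    ∃ α, IsAutoOn R α ∧ (∀ y ∈ Y, y ≠ a → α y = y) ∧ α a ≠ a := by
  classical
  obtain ⟨b, ⟨α, hα, hfix, rfl⟩, hb⟩ :=
    ((halg (Y.erase a) a (Finset.notMem_erase a Y)).sdiff (finite_singleton a)).nonempty
  exact ⟨α, hα, fun y hy hya => hfix y (Finset.mem_erase.mpr ⟨hya, hy⟩), hb⟩

theorem exists_isHomOn_pair_differing_only_at [Countable A] [Infinite A] (holig : Oligomorphic R)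
    (halg : NoAlgebraicity R) (a : A) :
    ∃ p q : A → A, IsHomOn R R p ∧ IsHomOn R R q ∧ p a ≠ q a ∧ ∀ x, x ≠ a → p x = q x := by
  classical
  have := (nonempty_denumerable A).some
  let e : ℕ ≃ A := (Denumerable.eqv A).symm
  choose α hα hfix hmove using fun n =>
    exists_isAutoOn_fixing_ne halg ((Finset.range n).image e) a
  let u : ℕ → ℕ → A := fun n j => Nat.casesOn j (α n a) e
  obtain ⟨t, ht⟩ := exists_forall_infinite_realizers holig u
  let p : A → A := fun x => t (e.symm x + 1)
  let q : A → A := Function.update p a (t 0)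
  have hlocal : ∀ m, ∃ n f, IsAutoOn R f ∧
      ∀ x, e.symm x < m → p x = f x ∧ q x = f (α n x) := by
    intro m
    obtain ⟨n, ⟨f, hf, htf⟩, hmn⟩ := (ht (m + 1)).exists_gt m
    refine ⟨n, f, hf, fun x hx => ?_⟩
    have hpx : p x = f x := by
      simpa [u] using htf (e.symm x + 1) (by omega)
    refine ⟨hpx, ?_⟩
    by_cases hxa : x = a
    · subst hxa
      simpa [q, u] using htf 0 (by omega)
    · have hx_mem : x ∈ (Finset.range n).image e :=
        Finset.mem_image.mpr ⟨e.symm x, Finset.mem_range.mpr (by omega), e.apply_symm_apply x⟩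
      rw [show q x = p x from Function.update_of_ne hxa _ p, hpx, hfix n x hx_mem hxa]
  have hbound : ∀ F : Finset A, ∀ x ∈ F, e.symm x < F.sup e.symm + 1 :=
    fun F x hx => Nat.lt_succ_of_le (Finset.le_sup hx)
  refine ⟨p, q, ?_, ?_, ?_, fun x hx => (Function.update_of_ne hx _ p).symm⟩
  · refine isHomOn_of_forall_finset_exists_eqOn fun F => ?_
    obtain ⟨n, f, hf, hpq⟩ := hlocal (F.sup e.symm + 1)
    exact ⟨f, hf.isHomOn, fun x hx => (hpq x (hbound F x hx)).1⟩
  · refine isHomOn_of_forall_finset_exists_eqOn fun F => ?_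
    obtain ⟨n, f, hf, hpq⟩ := hlocal (F.sup e.symm + 1)
    exact ⟨f ∘ α n, (hf.comp (hα n)).isHomOn, fun x hx => (hpq x (hbound F x hx)).2⟩
  · obtain ⟨n, f, hf, hpq⟩ := hlocal (e.symm a + 1)
    obtain ⟨hp, hq⟩ := hpq a (Nat.lt_succ_self _)
    rw [hp, hq]
    exact fun h => hmove n (hf.1.1 h).symm

end Relational

theorem isOpen_setOf_mul_ne_mul {S : Type*} [Monoid S] (p q : S) :
    IsOpen[zariskiTopology S] {s | p * s ≠ q * s} :=
  TopologicalSpace.GenerateOpen.basic _ ⟨1, [p], 1, [q], by simp [wordEval]⟩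

theorem Submonoid.setOf_mem_range_eq_setOf_mul_ne_mul {A : Type*} {M : Submonoid (Function.End A)}
    {p q : M} {a : A} (hpq : p.1 a ≠ q.1 a) (heq : ∀ x, x ≠ a → p.1 x = q.1 x) :
    {s : M | a ∈ range (s.1 : A → A)} = {s | p * s ≠ q * s} := by
  ext s
  constructor
  · rintro ⟨c, rfl⟩ h
    exact hpq (congrFun (congrArg Subtype.val h) c)
  · intro h
    by_contra hnot
    exact h (Subtype.ext (funext fun c => heq (s.1 c) fun hc => hnot ⟨c, hc⟩))

/-- For an ω-categorical structure `A` without algebraicity, for each `a ∈ A` the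
set of endomorphisms whose image contains `a` is Zariski-open in `End(A)`. -/
theorem stmt4 {ι A : Type*} {ar : ι → ℕ} [Countable A] [Infinite A]
    (R : ∀ i, (Fin (ar i) → A) → Prop)
    (holig : Oligomorphic R) (halg : NoAlgebraicity R) (a : A) :
    @IsOpen ↥(endSubmonoid R) (zariskiTopology ↥(endSubmonoid R))
      {s : ↥(endSubmonoid R) | a ∈ Set.range (s.1 : A → A)} := by
  obtain ⟨p, q, hp, hq, hpq, heq⟩ := exists_isHomOn_pair_differing_only_at holig halg a
  rw [Submonoid.setOf_mem_range_eq_setOf_mul_ne_mul (M := endSubmonoid R)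
    (p := ⟨p, hp⟩) (q := ⟨q, hq⟩) hpq heq]
  exact isOpen_setOf_mul_ne_mul _ _
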